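/- Fix a labeling of T_{3,∞} and ℓ ≥ 2. The set Q_{ℓ,∞} of σ ∈ Q̃_{ℓ,∞} for which the common value sgn_ℓ(σ,y)·sgn_{ℓ−1}(σ,y) equals +1 is a subgroup of Q̃_{ℓ,∞} of index exactly 2. -/

import Mathlib

/-!
Nodes of the infinite rooted `d`-ary tree `T_{d,∞}` are identified with their
labels, i.e. finite words over `Fin d`; the node below `s₁…s_m` is `s₁…s_{m-1}`.
A tree automorphism is a permutation of the nodes preserving levels (word
length) and the descendant relation (list prefix).
-/

namespace Arboreal

/-- The map induced by `σ` on the labels of the `d^n` nodes lying `n` levels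
above the node labeled `y` (junk value if the lengths do not work out, which
cannot happen for a tree automorphism). -/
noncomputable def localMap (d n : ℕ) (σ : Equiv.Perm (List (Fin d)))
    (y : List (Fin d)) (w : List.Vector (Fin d) n) : List.Vector (Fin d) n :=
  if h : ((σ (y ++ w.toList)).drop y.length).length = n then
    ⟨(σ (y ++ w.toList)).drop y.length, h⟩ else w

/-- `sgn d n σ y`: the sign of the permutation of the set `{0,…,d-1}^n` of
labels induced by `σ` on the nodes `n` levels above `y` (by convention `1`
if this map fails to be a bijection). -/
noncomputable def sgn (d n : ℕ) (σ : Equiv.Perm (List (Fin d)))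
    (y : List (Fin d)) : ℤˣ :=
  if h : Function.Bijective (localMap d n σ y) then
    Equiv.Perm.sign (Equiv.ofBijective _ h) else 1

/-- A permutation of the set of nodes of `T_{d,∞}` is a tree automorphism iff
it preserves levels and the descendant (prefix) relation. -/
def IsTreeAut (d : ℕ) (σ : Equiv.Perm (List (Fin d))) : Prop :=
  (∀ w, (σ w).length = w.length) ∧
    ∀ w₁ w₂ : List (Fin d), w₁ <+: w₂ → σ w₁ <+: σ w₂

/-!
The product `sgn_m(σ, y) · sgn_n(σ, y)` is a crossed homomorphism in `σ`, because the local
maps of a tree automorphism compose along the action on nodes. Hence on `Q̃` its common value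
is a homomorphism to `ℤˣ`, with kernel `Q`. The automorphism applying the transposition
`(0 1)` to every letter of a word over `Fin 3` has `sgn_n = (-1)^n` at every node (each level
above a node has an odd number `3^n` of nodes), so it lies in `Q̃` and is sent to `-1` when
`m + n` is odd; thus the homomorphism is onto and `Q` has index `2`.
-/

open Equiv Equiv.Perm

variable {d m n : ℕ} {σ τ : Perm (List (Fin d))}

theorem IsTreeAut.one : IsTreeAut d 1 := ⟨fun _ => rfl, fun _ _ h => h⟩

theorem IsTreeAut.mul (hσ : IsTreeAut d σ) (hτ : IsTreeAut d τ) : IsTreeAut d (σ * τ) :=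
  ⟨fun w => by rw [mul_apply, hσ.1, hτ.1], fun _ _ h => hσ.2 _ _ (hτ.2 _ _ h)⟩

theorem IsTreeAut.inv (hσ : IsTreeAut d σ) : IsTreeAut d σ⁻¹ := by
  have hlen (w : List (Fin d)) : (σ⁻¹ w).length = w.length := by
    simpa using (hσ.1 (σ⁻¹ w)).symm
  refine ⟨hlen, fun w₁ w₂ h => ?_⟩
  -- the prefix of `σ⁻¹ w₂` of the right length is mapped to a prefix of `w₂` of length `|w₁|`
  set v := (σ⁻¹ w₂).take w₁.length
  have hv : v <+: σ⁻¹ w₂ := List.take_prefix _ _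
  have hσv : σ v <+: w₂ := by simpa using hσ.2 _ _ hv
  have hσv_len : (σ v).length = w₁.length := by
    rw [hσ.1, List.length_take, hlen, min_eq_left h.length_le]
  have : σ v = w₁ :=
    (List.prefix_of_prefix_length_le hσv h hσv_len.le).eq_of_length hσv_len
  rwa [← eq_inv_iff_eq.mpr this]

theorem IsTreeAut.apply_nil (hσ : IsTreeAut d σ) : σ [] = [] :=
  List.length_eq_zero_iff.mp (hσ.1 [])

theorem IsTreeAut.apply_append (hσ : IsTreeAut d σ) (y : List (Fin d))
    (w : List.Vector (Fin d) n) :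
    σ (y ++ w.toList) = σ y ++ (localMap d n σ y w).toList := by
  have hp : σ y <+: σ (y ++ w.toList) := hσ.2 _ _ (List.prefix_append y w.toList)
  have hlen : ((σ (y ++ w.toList)).drop y.length).length = n := by
    rw [List.length_drop, hσ.1, List.length_append, w.toList_length]
    omega
  simp only [localMap, hlen, ↓reduceDIte, List.Vector.toList_mk]
  conv_lhs => rw [← List.take_append_drop y.length (σ (y ++ w.toList))]
  rw [← hσ.1 y, ← List.prefix_iff_eq_take.mp hp]

theorem localMap_one (y : List (Fin d)) : localMap d n 1 y = id := by
  funext w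
  have hlen : ((1 : Perm (List (Fin d))) (y ++ w.toList) |>.drop y.length).length = n := by
    rw [one_apply, List.drop_left, w.toList_length]
  simp only [localMap, hlen, ↓reduceDIte]
  exact List.Vector.toList_injective (by simp)

theorem localMap_mul (hσ : IsTreeAut d σ) (hτ : IsTreeAut d τ) (y : List (Fin d)) :
    localMap d n (σ * τ) y = localMap d n σ (τ y) ∘ localMap d n τ y := by
  funext w
  have h := (hσ.mul hτ).apply_append y w
  rw [mul_apply, hτ.apply_append, hσ.apply_append, mul_apply] at h
  exact List.Vector.toList_injective (List.append_cancel_left h).symm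

theorem localMap_bijective (hσ : IsTreeAut d σ) (y : List (Fin d)) :
    Function.Bijective (localMap d n σ y) := by
  refine Function.bijective_iff_has_inverse.mpr ⟨localMap d n σ⁻¹ (σ y), fun w => ?_, fun w => ?_⟩
  · simpa [localMap_one] using congrFun (localMap_mul (n := n) hσ.inv hσ y).symm w
  · simpa [localMap_one] using congrFun (localMap_mul (n := n) hσ hσ.inv (σ y)).symm w

theorem sgn_eq_sign {y : List (Fin d)} (e : Perm (List.Vector (Fin d) n))
    (he : ⇑e = localMap d n σ y) : sgn d n σ y = sign e := by
  have hb : Function.Bijective (localMap d n σ y) := he ▸ e.bijective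
  rw [sgn, dif_pos hb]
  congr
  exact Equiv.ext (congrFun he.symm)

theorem sgn_one (y : List (Fin d)) : sgn d n 1 y = 1 := by
  rw [sgn_eq_sign 1 (localMap_one y).symm, map_one]

theorem sgn_mul (hσ : IsTreeAut d σ) (hτ : IsTreeAut d τ) (y : List (Fin d)) :
    sgn d n (σ * τ) y = sgn d n σ (τ y) * sgn d n τ y := by
  let eσ := Equiv.ofBijective _ (localMap_bijective (n := n) hσ (τ y))
  let eτ := Equiv.ofBijective _ (localMap_bijective (n := n) hτ y)
  rw [sgn_eq_sign (eσ * eτ) (localMap_mul hσ hτ y).symm, sgn_eq_sign eσ rfl,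
    sgn_eq_sign eτ rfl, map_mul]

theorem sgn_inv (hσ : IsTreeAut d σ) (y : List (Fin d)) :
    sgn d n σ⁻¹ y = sgn d n σ (σ⁻¹ y) := by
  have h := sgn_mul (n := n) hσ hσ.inv y
  rw [mul_inv_cancel, sgn_one] at h
  rw [eq_inv_of_mul_eq_one_right h.symm, Int.units_inv_eq_self]

noncomputable def sgnProd (d m n : ℕ) (σ : Perm (List (Fin d))) (y : List (Fin d)) : ℤˣ :=
  sgn d m σ y * sgn d n σ y

section SgnProd

theorem sgnProd_one (y : List (Fin d)) : sgnProd d m n 1 y = 1 := by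
  rw [sgnProd, sgn_one, sgn_one, mul_one]

theorem sgnProd_mul (hσ : IsTreeAut d σ) (hτ : IsTreeAut d τ) (y : List (Fin d)) :
    sgnProd d m n (σ * τ) y = sgnProd d m n σ (τ y) * sgnProd d m n τ y := by
  rw [sgnProd, sgnProd, sgnProd, sgn_mul hσ hτ, sgn_mul hσ hτ, mul_mul_mul_comm]

theorem sgnProd_inv (hσ : IsTreeAut d σ) (y : List (Fin d)) :
    sgnProd d m n σ⁻¹ y = sgnProd d m n σ (σ⁻¹ y) := by
  rw [sgnProd, sgnProd, sgn_inv hσ, sgn_inv hσ]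

variable (d m n)

-- The paper's `Q̃_{ℓ,∞}` and `Q_{ℓ,∞}` are the case `m = ℓ`, `n = ℓ - 1` of these two subgroups.
def sgnProdConstSubgroup : Subgroup (Perm (List (Fin d))) where
  carrier := {σ | IsTreeAut d σ ∧ ∀ y, sgnProd d m n σ y = sgnProd d m n σ []}
  one_mem' := ⟨IsTreeAut.one, fun y => by rw [sgnProd_one, sgnProd_one]⟩
  mul_mem' := by
    rintro σ τ ⟨hσ, hσc⟩ ⟨hτ, hτc⟩
    refine ⟨hσ.mul hτ, fun y => ?_⟩
    rw [sgnProd_mul hσ hτ, sgnProd_mul hσ hτ, hτ.apply_nil, hσc, hτc, hσc]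
  inv_mem' := by
    rintro σ ⟨hσ, hσc⟩
    exact ⟨hσ.inv, fun y => by rw [sgnProd_inv hσ, sgnProd_inv hσ, hσc, hσc (σ⁻¹ [])]⟩

def sgnProdOneSubgroup : Subgroup (Perm (List (Fin d))) where
  carrier := {σ | IsTreeAut d σ ∧ ∀ y, sgnProd d m n σ y = 1}
  one_mem' := ⟨IsTreeAut.one, sgnProd_one⟩
  mul_mem' := by
    rintro σ τ ⟨hσ, hσ1⟩ ⟨hτ, hτ1⟩
    exact ⟨hσ.mul hτ, fun y => by rw [sgnProd_mul hσ hτ, hσ1, hτ1, mul_one]⟩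
  inv_mem' := by
    rintro σ ⟨hσ, hσ1⟩
    exact ⟨hσ.inv, fun y => by rw [sgnProd_inv hσ, hσ1]⟩

theorem sgnProdOneSubgroup_le : sgnProdOneSubgroup d m n ≤ sgnProdConstSubgroup d m n :=
  fun _ ⟨hσ, hσ1⟩ => ⟨hσ, fun y => by rw [hσ1, hσ1]⟩

noncomputable def rootSgnProd : sgnProdConstSubgroup d m n →* ℤˣ where
  toFun σ := sgnProd d m n σ []
  map_one' := sgnProd_one []
  map_mul' σ τ := by
    rw [Subgroup.coe_mul, sgnProd_mul σ.2.1 τ.2.1, τ.2.1.apply_nil]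

theorem sgnProdOneSubgroup_subgroupOf :
    (sgnProdOneSubgroup d m n).subgroupOf (sgnProdConstSubgroup d m n) =
      (rootSgnProd d m n).ker := by
  ext σ
  rw [Subgroup.mem_subgroupOf, MonoidHom.mem_ker]
  exact ⟨fun h => h.2 [], fun h => ⟨σ.2.1, fun y => (σ.2.2 y).trans h⟩⟩

end SgnProd

section Letterwise

variable {α : Type*}

def vectorMapPerm (π : Perm α) (n : ℕ) : Perm (List.Vector α n) where
  toFun := List.Vector.map π
  invFun := List.Vector.map π.symm
  left_inv v := List.Vector.toList_injective (by simp)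
  right_inv v := List.Vector.toList_injective (by simp)

theorem _root_.Int.units_pow_of_odd (u : ℤˣ) {k : ℕ} (hk : Odd k) : u ^ k = u := by
  rw [Int.units_pow_eq_pow_mod_two, Nat.odd_iff.mp hk, pow_one]

theorem sign_vectorMapPerm [Fintype α] [DecidableEq α] (hα : Odd (Fintype.card α))
    (π : Perm α) (n : ℕ) : sign (vectorMapPerm π n) = sign π ^ n := by
  induction n with
  | zero => rw [pow_zero, Subsingleton.elim (vectorMapPerm π 0) 1, map_one]
  | succ n ih =>
    -- under `v ↦ (head v, tail v)`, the map on `n + 1` letters is a product of two block maps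
    have hsplit : sign (vectorMapPerm π (n + 1)) =
        sign (prodCongrLeft fun _ => π) * sign (prodCongrRight fun _ => vectorMapPerm π n) :=
      (sign_eq_sign_of_equiv _ _ ⟨fun v => (v.head, v.tail), fun p => p.1 ::ᵥ p.2,
        fun v => by simp, fun p => by simp⟩ fun v => by simp [vectorMapPerm]).trans (map_mul ..)
    have hodd : Odd (Fintype.card (List.Vector α n)) := by
      rw [card_vector]; exact hα.pow
    rw [hsplit, sign_prodCongrLeft, sign_prodCongrRight, Finset.prod_const, Finset.prod_const,
      Finset.card_univ, Finset.card_univ, Int.units_pow_of_odd _ hodd,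
      Int.units_pow_of_odd _ hα, ih, pow_succ']

end Letterwise

theorem isTreeAut_listEquivOfEquiv (π : Perm (Fin d)) : IsTreeAut d (listEquivOfEquiv π) :=
  ⟨fun _ => List.length_map _, fun _ _ h => h.map π⟩

theorem localMap_listEquivOfEquiv (π : Perm (Fin d)) (y : List (Fin d)) :
    localMap d n (listEquivOfEquiv π) y = vectorMapPerm π n := by
  funext w
  have hdrop : (listEquivOfEquiv π (y ++ w.toList)).drop y.length = w.toList.map π := by
    simp [listEquivOfEquiv]
  have hlen : ((listEquivOfEquiv π (y ++ w.toList)).drop y.length).length = n := by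
    rw [hdrop, List.length_map, w.toList_length]
  simp only [localMap, hlen, ↓reduceDIte]
  exact List.Vector.toList_injective (by simpa [vectorMapPerm] using hdrop)

theorem sgn_listEquivOfEquiv (π : Perm (Fin 3)) (y : List (Fin 3)) :
    sgn 3 n (listEquivOfEquiv π) y = sign π ^ n := by
  rw [sgn_eq_sign _ (localMap_listEquivOfEquiv π y).symm,
    sign_vectorMapPerm (by decide) π n]

theorem rootSgnProd_surjective (hmn : Odd (m + n)) :
    Function.Surjective (rootSgnProd 3 m n) := by
  let μ := listEquivOfEquiv (swap (0 : Fin 3) 1)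
  have hμ (y) : sgnProd 3 m n μ y = -1 := by
    rw [sgnProd, sgn_listEquivOfEquiv, sgn_listEquivOfEquiv, ← pow_add,
      sign_swap (by decide), hmn.neg_one_pow]
  have hμ_mem : μ ∈ sgnProdConstSubgroup 3 m n :=
    ⟨isTreeAut_listEquivOfEquiv _, fun y => by rw [hμ, hμ]⟩
  intro u
  rcases Int.units_eq_one_or u with rfl | rfl
  · exact ⟨1, map_one _⟩
  · exact ⟨⟨μ, hμ_mem⟩, hμ []⟩

/-- for a fixed labeling of `T_{3,∞}` and `ℓ ≥ 2`, the set
`Q_{ℓ,∞}` of elements of `Q̃_{ℓ,∞}` whose common value of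
`sgn_ℓ(σ,y)·sgn_{ℓ-1}(σ,y)` is `+1` is a subgroup of `Q̃_{ℓ,∞}` of index
exactly `2`. -/
theorem Q_subgroup_index_two (ℓ : ℕ) (hℓ : 2 ≤ ℓ) :
    ∃ Htil H : Subgroup (Equiv.Perm (List (Fin 3))),
      (Htil : Set (Equiv.Perm (List (Fin 3)))) =
        {σ | IsTreeAut 3 σ ∧ ∀ y : List (Fin 3),
          sgn 3 ℓ σ y * sgn 3 (ℓ - 1) σ y =
            sgn 3 ℓ σ [] * sgn 3 (ℓ - 1) σ []} ∧
      (H : Set (Equiv.Perm (List (Fin 3)))) =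
        {σ | IsTreeAut 3 σ ∧ ∀ y : List (Fin 3),
          sgn 3 ℓ σ y * sgn 3 (ℓ - 1) σ y = 1} ∧
      H ≤ Htil ∧ H.relIndex Htil = 2 := by
  refine ⟨sgnProdConstSubgroup 3 ℓ (ℓ - 1), sgnProdOneSubgroup 3 ℓ (ℓ - 1), rfl, rfl,
    sgnProdOneSubgroup_le 3 ℓ (ℓ - 1), ?_⟩
  have hsurj := rootSgnProd_surjective (m := ℓ) (n := ℓ - 1) ⟨ℓ - 1, by omega⟩
  rw [Subgroup.relIndex, sgnProdOneSubgroup_subgroupOf, Subgroup.index_ker,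
    MonoidHom.range_eq_top_of_surjective _ hsurj, Subgroup.card_top, Nat.card_eq_fintype_card, Fintype.card_units_int]

end Arboreal
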